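/- Let F be a real vector space, let λ₁,…,λ_m be linear functionals on F with observation map Λ(f) = (λ₁(f),…,λ_m(f)), and let K ⊆ F be a convex set containing 0. Let γ_i (i in some index set) be linear functionals on F, and suppose the functional γ : F → ℝ admits the two representations γ(f) = sup_{a∈A} inf_{i∈I_a} γ_i(f) = inf_{b∈B} sup_{j∈J_b} γ_j(f) for all f ∈ F, where A, B are nonempty index sets and each I_a, J_b is a nonempty set of indices, all suprema and infima being finite. Assume e_♭ := sup{ (γ(f′) − γ(f″))/2 : f′, f″ ∈ K, Λ(f′) = Λ(f″) } is finite. Then there exist real coefficients c₀^{(a,b)} and vectors c^{(a,b)} ∈ ℝ^m (a ∈ A, b ∈ B) such that the functional δ : ℝ^m → ℝ defined by δ(y) = sup_{a∈A} inf_{b∈B} ( c₀^{(a,b)} + Σ_{k=1}^m c_k^{(a,b)} y_k ) satisfies |γ(f) − δ(Λ(f))| ≤ e_♭ for all f ∈ K; in particular δ is an optimal estimation functional, i.e. sup_{f∈K} |γ(f) − δ(Λ(f))| ≤ sup_{f∈K} |γ(f) − δ′(Λ(f))| for every map δ′ : ℝ^m → ℝ. -/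

import Mathlib

/-!
Each `ginf a` is concave and each `gsup b` is convex, and `ginf a ≤ γ ≤ gsup b`, so
`ginf a f' - eflat ≤ gsup b f'' + eflat` whenever `Λ f' = Λ f''`. A sandwich theorem then puts an
affine function of the observations between `ginf a - eflat` and `gsup b + eflat` on `K`. For
concave `g` below convex `h` along the fibres of `Λ : F → V`, separate `0` from the convex set
`{(Λ f' - Λ f'', r) | f', f'' ∈ K, r > h f' - g f''}` in `V × ℝ`. If the separating functional
is horizontal, its linear part is constant on `Λ(K)`, so quotienting `V` by a direction it does
not kill loses no information on `K`, and one inducts on `dim V`.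
Taking `sup_a inf_b` of these affine functions gives an estimator within `eflat` of `γ` on `K`.
-/

open Set Metric Module Filter Topology
open scoped ENNReal

theorem exists_strongDual_ne_zero_pos_of_finite {E : Type*} [NormedAddCommGroup E]
    [NormedSpace ℝ E] {s : Set E} (hs : s.Finite) (hne : s.Nonempty)
    (h0 : (0 : E) ∉ convexHull ℝ s) :
    ∃ φ : StrongDual ℝ E, φ ≠ 0 ∧ ∀ x ∈ s, 0 < φ x := by
  obtain ⟨φ, u, hφ0, hφs⟩ := geometric_hahn_banach_point_closed (convex_convexHull ℝ s)
    (hs.isCompact_convexHull ℝ).isClosed h0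
  rw [map_zero] at hφ0
  have hpos : ∀ x ∈ s, 0 < φ x := fun x hx => hφ0.trans (hφs x (subset_convexHull ℝ s hx))
  refine ⟨φ, fun hφ => ?_, hpos⟩
  obtain ⟨x, hx⟩ := hne
  simpa [hφ] using hpos x hx

/-- Finite subfamilies are handled by strict separation from a compact hull; compactness of the
unit sphere of the dual passes to all of `C`. -/
theorem exists_strongDual_ne_zero_nonneg_of_convex {E : Type*} [NormedAddCommGroup E]
    [NormedSpace ℝ E] [FiniteDimensional ℝ E] [Nontrivial E] {C : Set E} (hC : Convex ℝ C)
    (h0 : (0 : E) ∉ C) :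
    ∃ φ : StrongDual ℝ E, φ ≠ 0 ∧ ∀ x ∈ C, 0 ≤ φ x := by
  have hfin : ∀ u : Finset C,
      (sphere (0 : StrongDual ℝ E) 1 ∩ ⋂ x ∈ u, {φ | 0 ≤ φ x}).Nonempty := by
    intro u
    rcases u.eq_empty_or_nonempty with rfl | hu
    · simp [NormedSpace.sphere_nonempty]
    obtain ⟨φ, hφ, hφs⟩ := exists_strongDual_ne_zero_pos_of_finite (u.finite_toSet.image _)
      ((Finset.coe_nonempty.2 hu).image _)
      fun h => h0 (convexHull_min (by rintro _ ⟨x, -, rfl⟩; exact x.2) hC h)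
    refine ⟨‖φ‖⁻¹ • φ, by simp [norm_smul, hφ], mem_iInter₂.2 fun x hx => ?_⟩
    exact mul_nonneg (by positivity) (hφs x ⟨x, hx, rfl⟩).le
  obtain ⟨φ, hφ1, hφC⟩ := (isCompact_sphere 0 1).inter_iInter_nonempty
    (fun x : C => {φ : StrongDual ℝ E | 0 ≤ φ x})
    (fun x => isClosed_le continuous_const (continuous_eval_const _)) hfin
  exact ⟨φ, ne_of_mem_sphere hφ1 one_ne_zero, fun x hx => mem_iInter.1 hφC ⟨x, hx⟩⟩

theorem Module.exists_dual_ne_zero_nonneg_of_convex {W : Type*} [AddCommGroup W] [Module ℝ W]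
    [FiniteDimensional ℝ W] [Nontrivial W] {C : Set W} (hC : Convex ℝ C) (h0 : (0 : W) ∉ C) :
    ∃ φ : Dual ℝ W, φ ≠ 0 ∧ ∀ x ∈ C, 0 ≤ φ x := by
  let e := (finBasis ℝ W).equivFun
  have : Nontrivial (Fin (finrank ℝ W) → ℝ) := e.symm.toEquiv.nontrivial
  obtain ⟨φ, hφ, hφC⟩ := exists_strongDual_ne_zero_nonneg_of_convex
    (hC.linear_image e.toLinearMap)
    (by rintro ⟨x, hx, hx0⟩; exact h0 (e.map_eq_zero_iff.1 hx0 ▸ hx))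
  refine ⟨φ.toLinearMap ∘ₗ e.toLinearMap, fun h => hφ ?_, fun x hx => hφC _ ⟨x, hx, rfl⟩⟩
  ext y
  simpa using LinearMap.congr_fun h (e.symm y)

theorem Submodule.eq_of_mkQ_span_singleton_eq {𝕜 V : Type*} [Field 𝕜] [AddCommGroup V]
    [Module 𝕜 V] {ψ : Dual 𝕜 V} {w x y : V} (hw : ψ w ≠ 0) (hψ : ψ x = ψ y)
    (h : (𝕜 ∙ w).mkQ x = (𝕜 ∙ w).mkQ y) : x = y := by
  obtain ⟨a, ha⟩ := mem_span_singleton.1 ((Submodule.Quotient.eq _).1 h)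
  have : a * ψ w = 0 := by rw [← smul_eq_mul, ← map_smul, ha, map_sub, hψ, sub_self]
  rw [← sub_eq_zero, ← ha, (mul_eq_zero.1 this).resolve_right hw, zero_smul]

section Sandwich

variable {F V : Type*} [AddCommGroup F] [Module ℝ F] [AddCommGroup V] [Module ℝ V]
  [FiniteDimensional ℝ V] (Λ : F →ₗ[ℝ] V) {K : Set F} {g h : F → ℝ}

theorem exists_dual_ne_zero_nonneg_of_concaveOn_of_convexOn (hg : ConcaveOn ℝ K g)
    (hh : ConvexOn ℝ K h) (hgh : ∀ f' ∈ K, ∀ f'' ∈ K, Λ f' = Λ f'' → g f' ≤ h f'') :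
    ∃ φ : Dual ℝ (V × ℝ), φ ≠ 0 ∧
      ∀ f' ∈ K, ∀ f'' ∈ K, ∀ r, h f' - g f'' < r → 0 ≤ φ (Λ f' - Λ f'', r) := by
  have hgap : ConvexOn ℝ (K ×ˢ K) fun p : F × F => h p.1 - g p.2 :=
    ((hh.comp_linearMap (LinearMap.fst ℝ F F)).subset (fun p hp => hp.1) (hh.1.prod hg.1)).sub
      ((hg.comp_linearMap (LinearMap.snd ℝ F F)).subset (fun p hp => hp.2) (hh.1.prod hg.1))
  let L : (F × F) × ℝ →ₗ[ℝ] V × ℝ :=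
    (Λ ∘ₗ (LinearMap.fst ℝ F F - LinearMap.snd ℝ F F)).prodMap LinearMap.id
  have h0 : (0 : V × ℝ) ∉ L '' {p | p.1 ∈ K ×ˢ K ∧ h p.1.1 - g p.1.2 < p.2} := by
    rintro ⟨⟨⟨f', f''⟩, r⟩, ⟨⟨hf', hf''⟩, hr⟩, hz⟩
    simp only [L, LinearMap.prodMap_apply, LinearMap.comp_apply, LinearMap.sub_apply,
      LinearMap.fst_apply, LinearMap.snd_apply, LinearMap.id_apply, Prod.mk_eq_zero, map_sub,
      sub_eq_zero] at hz
    linarith [hgh f'' hf'' f' hf' hz.1.symm]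
  obtain ⟨φ, hφ, hφC⟩ :=
    exists_dual_ne_zero_nonneg_of_convex (hgap.convex_strict_epigraph.linear_image L) h0
  exact ⟨φ, hφ, fun f' hf' f'' hf'' r hr =>
    hφC _ ⟨((f', f''), r), ⟨⟨hf', hf''⟩, hr⟩, by simp [L]⟩⟩

theorem exists_dual_separating_of_concaveOn_of_convexOn (hg : ConcaveOn ℝ K g)
    (hh : ConvexOn ℝ K h) (hgh : ∀ f' ∈ K, ∀ f'' ∈ K, Λ f' = Λ f'' → g f' ≤ h f'')
    {f₀ : F} (hf₀ : f₀ ∈ K) :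
    ∃ (ψ : Dual ℝ V) (σ : ℝ), (0 < σ ∨ σ = 0 ∧ ψ ≠ 0) ∧
      ∀ f' ∈ K, ∀ f'' ∈ K, ψ (Λ f'') - ψ (Λ f') ≤ (h f' - g f'') * σ := by
  obtain ⟨φ, hφ, hφK⟩ := exists_dual_ne_zero_nonneg_of_concaveOn_of_convexOn Λ hg hh hgh
  set ψ : Dual ℝ V := φ ∘ₗ LinearMap.inl ℝ V ℝ
  set σ := φ (0, 1)
  have hφ_apply : ∀ v r, φ (v, r) = ψ v + r * σ := fun v r => by
    rw [show (v, r) = LinearMap.inl ℝ V ℝ v + r • (0, 1) by ext <;> simp, map_add, map_smul,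
      smul_eq_mul]
    rfl
  have hsep : ∀ f' ∈ K, ∀ f'' ∈ K, ∀ r, h f' - g f'' < r → ψ (Λ f'') - ψ (Λ f') ≤ r * σ :=
    fun f' hf' f'' hf'' r hr => by
      have := hφK f' hf' f'' hf'' r hr
      rw [hφ_apply, map_sub] at this
      linarith
  have hσ : 0 ≤ σ := by
    have := hsep f₀ hf₀ f₀ hf₀ (|h f₀ - g f₀| + 1) (by linarith [le_abs_self (h f₀ - g f₀)])
    rw [sub_self] at this
    exact nonneg_of_mul_nonneg_right this (by positivity)
  refine ⟨ψ, σ, ?_, fun f' hf' f'' hf'' => ?_⟩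
  · refine hσ.lt_or_eq.imp id fun hσ0 => ⟨hσ0.symm, fun hψ => hφ ?_⟩
    exact LinearMap.ext fun ⟨v, r⟩ => by simp [hφ_apply, hψ, ← hσ0]
  · exact ge_of_tendsto (x := 𝓝[>] (h f' - g f''))
      (((continuous_mul_const σ).tendsto _).mono_left nhdsWithin_le_nhds)
      (eventually_nhdsWithin_of_forall (hsep f' hf' f'' hf''))

theorem exists_affine_between_of_concaveOn_of_convexOn (hg : ConcaveOn ℝ K g)
    (hh : ConvexOn ℝ K h) (hgh : ∀ f' ∈ K, ∀ f'' ∈ K, Λ f' = Λ f'' → g f' ≤ h f'') :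
    ∃ (c : ℝ) (φ : Dual ℝ V), ∀ f ∈ K, g f ≤ c + φ (Λ f) ∧ c + φ (Λ f) ≤ h f := by
  induction hn : finrank ℝ V using Nat.strong_induction_on generalizing V with
  | _ n ih =>
  rcases K.eq_empty_or_nonempty with rfl | ⟨f₀, hf₀⟩
  · exact ⟨0, 0, by simp⟩
  obtain ⟨ψ, σ, hσ | ⟨hσ, hψ⟩, hsep⟩ :=
    exists_dual_separating_of_concaveOn_of_convexOn Λ hg hh hgh hf₀
  · have hkey : ∀ f' ∈ K, ∀ f'' ∈ K, g f'' + σ⁻¹ * ψ (Λ f'') ≤ h f' + σ⁻¹ * ψ (Λ f') :=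
      fun f' hf' f'' hf'' => by
        have := (inv_mul_le_iff₀ hσ).2 ((hsep f' hf' f'' hf'').trans_eq (mul_comm _ _))
        linarith
    obtain ⟨c, hc_low, hc_up⟩ := exists_between_of_forall_le
      ((nonempty_of_mem hf₀).image fun f => g f + σ⁻¹ * ψ (Λ f))
      ((nonempty_of_mem hf₀).image fun f => h f + σ⁻¹ * ψ (Λ f))
      (forall_mem_image.2 fun f'' hf'' => forall_mem_image.2 fun f' hf' => hkey f' hf' f'' hf'')
    refine ⟨c, -σ⁻¹ • ψ, fun f hf => ?_⟩
    have := hc_low (mem_image_of_mem _ hf)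
    have := hc_up (mem_image_of_mem _ hf)
    simp only [LinearMap.smul_apply, smul_eq_mul, neg_mul]
    constructor <;> linarith
  · obtain ⟨w, hw⟩ : ∃ w, ψ w ≠ 0 := by
      by_contra! hψ0
      exact hψ (LinearMap.ext hψ0)
    have hψΛ : ∀ f' ∈ K, ∀ f'' ∈ K, ψ (Λ f'') ≤ ψ (Λ f') := fun f' hf' f'' hf'' => by
      simpa [hσ] using hsep f' hf' f'' hf''
    have hrank : finrank ℝ (V ⧸ ℝ ∙ w) < n := by
      have := (ℝ ∙ w).finrank_quotient_add_finrank
      rw [finrank_span_singleton (by rintro rfl; simp at hw)] at this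
      omega
    obtain ⟨c, φ, hφ⟩ := ih _ hrank ((ℝ ∙ w).mkQ ∘ₗ Λ) (fun f' hf' f'' hf'' hΛ =>
      hgh f' hf' f'' hf'' (Submodule.eq_of_mkQ_span_singleton_eq hw
        ((hψΛ f' hf' f'' hf'').antisymm' (hψΛ f'' hf'' f' hf')) hΛ)) rfl
    exact ⟨c, φ ∘ₗ (ℝ ∙ w).mkQ, hφ⟩

end Sandwich

theorem exists_coeffs_between_of_concaveOn_of_convexOn {F : Type*} [AddCommGroup F]
    [Module ℝ F] {m : ℕ} (lam : Fin m → F →ₗ[ℝ] ℝ) {K : Set F} {g h : F → ℝ}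
    (hg : ConcaveOn ℝ K g) (hh : ConvexOn ℝ K h)
    (hgh : ∀ f' ∈ K, ∀ f'' ∈ K, (∀ k, lam k f' = lam k f'') → g f' ≤ h f'') :
    ∃ (c₀ : ℝ) (c : Fin m → ℝ), ∀ f ∈ K,
      g f ≤ c₀ + ∑ k, c k * lam k f ∧ c₀ + ∑ k, c k * lam k f ≤ h f := by
  obtain ⟨c₀, φ, hφ⟩ := exists_affine_between_of_concaveOn_of_convexOn (LinearMap.pi lam) hg hh
    fun f' hf' f'' hf'' hΛ => hgh f' hf' f'' hf'' (congr_fun hΛ)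
  have hφ_apply :
      ∀ f, φ (LinearMap.pi lam f) = ∑ k, (φ fun j => if k = j then 1 else 0) * lam k f := fun f => by
    rw [φ.pi_apply_eq_sum_univ]
    exact Finset.sum_congr rfl fun k _ => mul_comm _ _
  exact ⟨c₀, _, fun f hf => hφ_apply f ▸ hφ f hf⟩

section Representations

variable {ι F : Type*} [AddCommGroup F] [Module ℝ F] {γi : ι → F →ₗ[ℝ] ℝ} {I : Set ι}

theorem concaveOn_of_isGLB_image {G : F → ℝ} (hG : ∀ f, IsGLB ((fun i => γi i f) '' I) (G f)) :
    ConcaveOn ℝ univ G :=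
  ⟨convex_univ, fun x _ y _ a b ha hb _ => (hG _).2 <| forall_mem_image.2 fun i hi => by
    simp only [map_add, map_smul, smul_eq_mul]
    gcongr
    exacts [(hG x).1 (mem_image_of_mem _ hi), (hG y).1 (mem_image_of_mem _ hi)]⟩

theorem convexOn_of_isLUB_image {G : F → ℝ} (hG : ∀ f, IsLUB ((fun i => γi i f) '' I) (G f)) :
    ConvexOn ℝ univ G :=
  ⟨convex_univ, fun x _ y _ a b ha hb _ => (hG _).2 <| forall_mem_image.2 fun i hi => by
    simp only [map_add, map_smul, smul_eq_mul]
    gcongr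
    exacts [(hG x).1 (mem_image_of_mem _ hi), (hG y).1 (mem_image_of_mem _ hi)]⟩

end Representations

theorem EReal.exists_iSup_iInf_eq_coe {A B : Type*} [Nonempty A] [Nonempty B] {x : A → B → ℝ}
    {L : A → ℝ} {U : B → ℝ} (hL : ∀ a b, L a ≤ x a b) (hU : ∀ a b, x a b ≤ U b) :
    ∃ d : ℝ, (⨆ a, ⨅ b, (x a b : EReal)) = d ∧ (∀ a, L a ≤ d) ∧ ∀ b, d ≤ U b := by
  set D := ⨆ a, ⨅ b, (x a b : EReal)
  have hlo : ∀ a, (L a : EReal) ≤ D := fun a =>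
    (le_iInf fun b => EReal.coe_le_coe (hL a b)).trans
      (le_iSup (fun a => ⨅ b, (x a b : EReal)) a)
  have hup : ∀ b, D ≤ U b := fun b =>
    iSup_le fun a => (iInf_le _ b).trans (EReal.coe_le_coe (hU a b))
  obtain ⟨a₀⟩ := ‹Nonempty A›
  obtain ⟨b₀⟩ := ‹Nonempty B›
  have hD : (D.toReal : EReal) = D :=
    EReal.coe_toReal ((hup b₀).trans_lt (EReal.coe_lt_top _)).ne
      ((EReal.bot_lt_coe _).trans_le (hlo a₀)).ne'
  refine ⟨D.toReal, hD.symm, fun a => ?_, fun b => ?_⟩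
  · exact EReal.coe_le_coe_iff.1 (hD ▸ hlo a)
  · exact EReal.coe_le_coe_iff.1 (hD ▸ hup b)

noncomputable def worstCaseError {F Y : Type*} (K : Set F) (γ : F → ℝ) (Λ : F → Y)
    (δ : Y → ℝ) : ℝ≥0∞ :=
  ⨆ f ∈ K, ENNReal.ofReal |γ f - δ (Λ f)|

/-- An estimator cannot tell `f'` from `f''` when `Λ f' = Λ f''`, so it errs by at least
`(γ f' - γ f'') / 2` at one of them. -/
theorem ofReal_le_worstCaseError {F Y : Type*} {K : Set F} {γ : F → ℝ} {Λ : F → Y} {e : ℝ}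
    (he : IsLUB {x : ℝ | ∃ f' ∈ K, ∃ f'' ∈ K, Λ f' = Λ f'' ∧ x = (γ f' - γ f'') / 2} e)
    (δ : Y → ℝ) : ENNReal.ofReal e ≤ worstCaseError K γ Λ δ := by
  by_cases htop : worstCaseError K γ Λ δ = ⊤
  · simp [htop]
  rw [ENNReal.ofReal_le_iff_le_toReal htop]
  refine he.2 ?_
  rintro _ ⟨f', hf', f'', hf'', hΛ, rfl⟩
  have hle : ∀ f ∈ K, |γ f - δ (Λ f)| ≤ (worstCaseError K γ Λ δ).toReal := fun f hf =>
    (ENNReal.ofReal_le_iff_le_toReal htop).1 (le_iSup₂_of_le f hf le_rfl)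
  have h' := hle f' hf'
  have h'' := hle f'' hf''
  rw [hΛ] at h'
  rw [abs_le] at h' h''
  linarith

theorem stmt_3_general {F : Type*} [AddCommGroup F] [Module ℝ F] {m : ℕ}
    (lam : Fin m → F →ₗ[ℝ] ℝ)
    (K : Set F) (hK : Convex ℝ K)
    {ι A B : Type*} [Nonempty A] [Nonempty B]
    (γi : ι → F →ₗ[ℝ] ℝ)
    (Ia : A → Set ι)
    (Jb : B → Set ι)
    (ginf : A → F → ℝ) (hginf : ∀ a f, IsGLB ((fun i => γi i f) '' Ia a) (ginf a f))
    (gsup : B → F → ℝ) (hgsup : ∀ b f, IsLUB ((fun j => γi j f) '' Jb b) (gsup b f))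
    (γ : F → ℝ)
    (hγ1 : ∀ f, IsLUB (Set.range fun a => ginf a f) (γ f))
    (hγ2 : ∀ f, IsGLB (Set.range fun b => gsup b f) (γ f))
    (eflat : ℝ)
    (heflat : IsLUB {x : ℝ | ∃ f' ∈ K, ∃ f'' ∈ K,
        (∀ k, lam k f' = lam k f'') ∧ x = (γ f' - γ f'') / 2} eflat) :
    ∃ (c0 : A → B → ℝ) (c : A → B → Fin m → ℝ) (δ : (Fin m → ℝ) → ℝ),
      (∀ f ∈ K,
        (⨆ a, ⨅ b, ((c0 a b + ∑ k, c a b k * lam k f : ℝ) : EReal)) =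
          ((δ (fun k => lam k f) : ℝ) : EReal)) ∧
      (∀ f ∈ K, |γ f - δ (fun k => lam k f)| ≤ eflat) ∧
      (∀ δ' : (Fin m → ℝ) → ℝ,
        (⨆ f ∈ K, ENNReal.ofReal |γ f - δ (fun k => lam k f)|) ≤
          ⨆ f ∈ K, ENNReal.ofReal |γ f - δ' (fun k => lam k f)|) := by
  have hsandwich : ∀ a b, ∃ (c₀ : ℝ) (c : Fin m → ℝ), ∀ f ∈ K,
      ginf a f - eflat ≤ c₀ + ∑ k, c k * lam k f ∧ c₀ + ∑ k, c k * lam k f ≤ gsup b f + eflat :=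
    fun a b => exists_coeffs_between_of_concaveOn_of_convexOn lam
      (((concaveOn_of_isGLB_image (hginf a)).subset (subset_univ K) hK).add_const _)
      (((convexOn_of_isLUB_image (hgsup b)).subset (subset_univ K) hK).add_const _)
      fun f' hf' f'' hf'' hΛ => by
        linarith [(hγ1 f').1 ⟨a, rfl⟩, (hγ2 f'').1 ⟨b, rfl⟩, heflat.1 ⟨f', hf', f'', hf'', hΛ, rfl⟩]
  choose c₀ c hc using hsandwich
  let δ : (Fin m → ℝ) → ℝ := fun y =>
    (⨆ a, ⨅ b, ((c₀ a b + ∑ k, c a b k * y k : ℝ) : EReal)).toReal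
  have hδ : ∀ f ∈ K,
      (⨆ a, ⨅ b, ((c₀ a b + ∑ k, c a b k * lam k f : ℝ) : EReal)) = δ (fun k => lam k f) ∧
        |γ f - δ (fun k => lam k f)| ≤ eflat := fun f hf => by
    obtain ⟨d, hd, hlo, hup⟩ :=
      EReal.exists_iSup_iInf_eq_coe (fun a b => (hc a b f hf).1) (fun a b => (hc a b f hf).2)
    have hδd : δ (fun k => lam k f) = d := by simp only [δ, hd, EReal.toReal_coe]
    refine ⟨hδd ▸ hd, hδd ▸ abs_sub_le_iff.2 ⟨?_, ?_⟩⟩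
    · have : γ f ≤ d + eflat := (hγ1 f).2 <| forall_mem_range.2 fun a => by linarith [hlo a]
      linarith
    · have : d - eflat ≤ γ f := (hγ2 f).2 <| forall_mem_range.2 fun b => by linarith [hup b]
      linarith
  refine ⟨c₀, c, δ, fun f hf => (hδ f hf).1, fun f hf => (hδ f hf).2, fun δ' => ?_⟩
  simp_rw [← funext_iff] at heflat
  exact (iSup₂_le fun f hf => ENNReal.ofReal_le_ofReal (hδ f hf).2).trans
    (ofReal_le_worstCaseError heflat δ')

/-- **Optimal estimation of a mixed sup-inf of linear functionals (Theorem ThmExt).**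
If `γ` admits both a sup-inf and an inf-sup representation by linear functionals
(all inner suprema/infima being finite, as encoded by `ginf`, `gsup`), `K` is convex
containing `0`, and the intrinsic lower bound `eflat` is finite, then there exist
coefficients such that the sup-inf-affine functional `δ` of the observations has
worst-case error at most `eflat` over `K`; in particular `δ` is optimal. -/
theorem stmt_3 {F : Type*} [AddCommGroup F] [Module ℝ F] {m : ℕ}
    (lam : Fin m → F →ₗ[ℝ] ℝ)
    (K : Set F) (hK : Convex ℝ K) (h0K : (0 : F) ∈ K)
    {ι A B : Type*} [Nonempty A] [Nonempty B]
    (γi : ι → F →ₗ[ℝ] ℝ)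
    (Ia : A → Set ι) (hIa : ∀ a, (Ia a).Nonempty)
    (Jb : B → Set ι) (hJb : ∀ b, (Jb b).Nonempty)
    (ginf : A → F → ℝ) (hginf : ∀ a f, IsGLB ((fun i => γi i f) '' Ia a) (ginf a f))
    (gsup : B → F → ℝ) (hgsup : ∀ b f, IsLUB ((fun j => γi j f) '' Jb b) (gsup b f))
    (γ : F → ℝ)
    (hγ1 : ∀ f, IsLUB (Set.range fun a => ginf a f) (γ f))
    (hγ2 : ∀ f, IsGLB (Set.range fun b => gsup b f) (γ f))
    (eflat : ℝ)
    (heflat : IsLUB {x : ℝ | ∃ f' ∈ K, ∃ f'' ∈ K,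
        (∀ k, lam k f' = lam k f'') ∧ x = (γ f' - γ f'') / 2} eflat) :
    ∃ (c0 : A → B → ℝ) (c : A → B → Fin m → ℝ) (δ : (Fin m → ℝ) → ℝ),
      (∀ f ∈ K,
        (⨆ a, ⨅ b, ((c0 a b + ∑ k, c a b k * lam k f : ℝ) : EReal)) =
          ((δ (fun k => lam k f) : ℝ) : EReal)) ∧
      (∀ f ∈ K, |γ f - δ (fun k => lam k f)| ≤ eflat) ∧
      (∀ δ' : (Fin m → ℝ) → ℝ,
        (⨆ f ∈ K, ENNReal.ofReal |γ f - δ (fun k => lam k f)|) ≤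
          ⨆ f ∈ K, ENNReal.ofReal |γ f - δ' (fun k => lam k f)|) :=
  stmt_3_general lam K hK γi Ia Jb ginf hginf gsup hgsup γ hγ1 hγ2 eflat heflat
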